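/- If h ∈ ℤ[t] is monic and all its complex roots lie in the closed unit disk, then every root of h is either 0 or a root of unity. -/

import Mathlib

/-!
A nonzero root `α` of `h` is an algebraic integer, and every complex embedding of the number field
`ℚ(α)` sends `α` to a root of `h`, so all conjugates of `α` lie in the closed unit disk. The same
then holds for every power of `α`; their minimal polynomials have bounded integer coefficients, so
only finitely many distinct powers exist, and `α ^ a = α ^ b` with `a ≠ b` makes `α` a root of
unity (`NumberField.Embeddings.pow_eq_one_of_norm_le_one`).
-/

open Polynomial IntermediateField

lemma aeval_eq_zero_of_mem_roots_map_intCast {A : Type*} [CommRing A] [IsDomain A] {h : ℤ[X]}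
    {x : A} (hx : x ∈ (h.map (Int.castRingHom A)).roots) : aeval x h = 0 := by
  simpa [aeval_def, eval_map] using isRoot_of_mem_roots hx

lemma RingHom.map_mem_roots_map_intCast {K A : Type*} [Ring K] [CommRing A] [IsDomain A]
    (φ : K →+* A) {h : ℤ[X]} (h0 : h.map (Int.castRingHom A) ≠ 0) {x : K} (hx : aeval x h = 0) :
    φ x ∈ (h.map (Int.castRingHom A)).roots := by
  rw [mem_roots h0, IsRoot, eval_map, ← algebraMap_int_eq, ← aeval_def, ← φ.toIntAlgHom_apply,
    aeval_algHom_apply, hx, map_zero]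

theorem exists_pow_eq_one_of_forall_norm_embedding_le_one {L : Type*} [Field L] [CharZero L]
    {A : Type*} [NormedField A] [IsAlgClosed A] [NormedAlgebra ℚ A] {α : L} (hα₀ : α ≠ 0)
    (hαi : IsIntegral ℤ α) (hconj : ∀ φ : ℚ⟮α⟯ →+* A, ‖φ (AdjoinSimple.gen ℚ α)‖ ≤ 1) :
    ∃ n : ℕ, 0 < n ∧ α ^ n = 1 := by
  have hfin : FiniteDimensional ℚ ℚ⟮α⟯ := adjoin.finiteDimensional hαi.tower_top
  have : NumberField ℚ⟮α⟯ := ⟨⟩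
  have hinj : Function.Injective (algebraMap ℚ⟮α⟯ L) := (algebraMap ℚ⟮α⟯ L).injective
  have hgen := AdjoinSimple.algebraMap_gen ℚ α
  obtain ⟨n, hn, hpow⟩ := NumberField.Embeddings.pow_eq_one_of_norm_le_one ℚ⟮α⟯ A
    (x := AdjoinSimple.gen ℚ α) (by rintro h0; simp [← hgen, h0] at hα₀)
    ((isIntegral_algebraMap_iff hinj).1 (hgen ▸ hαi)) hconj
  exact ⟨n, hn, by rw [← hgen, ← map_pow, hpow, map_one]⟩

/-- Kronecker's theorem: if `h ∈ ℤ[t]` is monic and all its complex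
roots lie in the closed unit disk, then every root of `h` is either `0` or a root
of unity. -/
theorem kronecker (h : Polynomial ℤ) (hm : h.Monic)
    (hb : ∀ α ∈ (h.map (Int.castRingHom ℂ)).roots, ‖α‖ ≤ 1) :
    ∀ α ∈ (h.map (Int.castRingHom ℂ)).roots, α = 0 ∨ ∃ k : ℕ, 0 < k ∧ α ^ k = 1 := by
  intro α hα
  rcases eq_or_ne α 0 with rfl | hα₀
  · exact Or.inl rfl
  have hroot := aeval_eq_zero_of_mem_roots_map_intCast hα
  have hgen_root : aeval (AdjoinSimple.gen ℚ α) h = 0 := by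
    apply (algebraMap ℚ⟮α⟯ ℂ).injective
    rw [← aeval_algebraMap_apply, AdjoinSimple.algebraMap_gen, hroot, map_zero]
  refine Or.inr <| exists_pow_eq_one_of_forall_norm_embedding_le_one hα₀ ⟨h, hm, hroot⟩
    fun φ ↦ hb _ ?_
  exact φ.map_mem_roots_map_intCast (hm.map _).ne_zero hgen_root
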